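/- Suppose ρ̂₁ < ρ < ρ̂₂. Then the infimum of g(t,s) over the region Ā = {(t,s) : 0 < s ≤ t} equals g_L(s*) = (2/(1+ρ))(μ₁+μ₂+2/s*), and (s*, s*) is the unique minimizer of g on Ā. -/

import Mathlib

/-!
For weights `α, β ≥ 0`, Cauchy–Schwarz in the inner product `Σ_{ts}⁻¹` bounds
`(x, y) Σ_{ts}⁻¹ (x, y)ᵀ` below by `(αx + βy)² / (α²t + (2ραβ + β²)s)`, and on the constraint set
`αx + βy ≥ α(1 + μ₁t) + β(1 + μ₂s)`. Take `(α, β)` proportional to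
`Σ_{s*s*}⁻¹ (1 + μ₁s*, 1 + μ₂s*)ᵀ`.
Using that `s*` is the critical point of `g_L`, the bound minus `g_L(s*)` is, up to a positive
denominator, a square plus a multiple `C (t - s)`; the hypotheses `ρ̂₁ < ρ < ρ̂₂` make the weights
and `C` positive. Hence `g ≥ g_L(s*)` on `Ā`, with equality only at `t = s = s*`, where the corner
`(1 + μ₁s*, 1 + μ₂s*)` attains it.
-/

open Matrix

/-- The covariance matrix of `(X₁(t), X₂(s))`. -/
noncomputable def covM (ρ t s : ℝ) : Matrix (Fin 2) (Fin 2) ℝ :=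
  !![t, ρ * min t s; ρ * min t s, s]

/-- The quadratic form `(x,y) Σ_{ts}⁻¹ (x,y)ᵀ`. -/
noncomputable def quadF (ρ t s x y : ℝ) : ℝ :=
  dotProduct ![x, y] ((covM ρ t s)⁻¹.mulVec ![x, y])

/-- `g(t,s) = inf{ (x,y) Σ_{ts}⁻¹ (x,y)ᵀ : x ≥ 1+μ₁t, y ≥ 1+μ₂s }`. -/
noncomputable def gFun (μ₁ μ₂ ρ t s : ℝ) : ℝ :=
  sInf { q : ℝ | ∃ x y : ℝ, 1 + μ₁ * t ≤ x ∧ 1 + μ₂ * s ≤ y ∧ q = quadF ρ t s x y }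

/-- `g₃(t,s)`: the quadratic form at the corner point `(1+μ₁t, 1+μ₂s)`. -/
noncomputable def g3Fun (μ₁ μ₂ ρ t s : ℝ) : ℝ :=
  quadF ρ t s (1 + μ₁ * t) (1 + μ₂ * s)

/-- `g_L(s)`: the value of `g₃` on the diagonal. -/
noncomputable def gLFun (μ₁ μ₂ ρ s : ℝ) : ℝ :=
  ((1 + μ₁ * s) ^ 2 + (1 + μ₂ * s) ^ 2 - 2 * ρ * (1 + μ₁ * s) * (1 + μ₂ * s))
    / ((1 - ρ ^ 2) * s)

section QuadraticForm

variable {ρ t s : ℝ}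

lemma quadF_eq (hst : s ≤ t) (x y : ℝ) :
    quadF ρ t s x y = (s * x ^ 2 - 2 * ρ * s * x * y + t * y ^ 2) / (t * s - ρ ^ 2 * s ^ 2) := by
  simp only [quadF, dotProduct, Nat.succ_eq_add_one, Nat.reduceAdd, mulVec, covM, min_eq_right hst,
    inv_def, det_fin_two_of, Ring.inverse_eq_inv', adjugate_fin_two_of, Matrix.smul_apply, of_apply,
    cons_val', cons_val_fin_one, smul_eq_mul, Fin.sum_univ_two, Fin.isValue, cons_val_zero,
    cons_val_one, mul_neg, neg_mul]
  ring

lemma covM_det_pos (hs : 0 < s) (hst : s ≤ t) (hρ : ρ ^ 2 < 1) :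
    0 < t * s - ρ ^ 2 * s ^ 2 := by
  nlinarith [mul_pos hs hs, mul_le_mul_of_nonneg_right hst hs.le]

/-- Cauchy–Schwarz for the inner product `Σ_{ts}⁻¹`, tested against `Σ_{ts} (α, β)ᵀ`. -/
lemma sq_add_le_quadF_mul (hs : 0 < s) (hst : s ≤ t) (hρ : ρ ^ 2 < 1) (α β x y : ℝ) :
    (α * x + β * y) ^ 2 ≤ quadF ρ t s x y * (α ^ 2 * t + (2 * ρ * α * β + β ^ 2) * s) := by
  have hdet := covM_det_pos hs hst hρ
  rw [quadF_eq hst, div_mul_eq_mul_div, le_div_iff₀ hdet]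
  have lagrange : (s * x ^ 2 - 2 * ρ * s * x * y + t * y ^ 2)
        * (α ^ 2 * t + (2 * ρ * α * β + β ^ 2) * s) - (α * x + β * y) ^ 2 * (t * s - ρ ^ 2 * s ^ 2)
      = (x * (α * ρ * s + β * s) - y * (α * t + β * ρ * s)) ^ 2 := by ring
  linarith [sq_nonneg (x * (α * ρ * s + β * s) - y * (α * t + β * ρ * s))]

lemma g3Fun_diag (μ₁ μ₂ : ℝ) (hs : 0 < s) (hρ : ρ ^ 2 < 1) :
    g3Fun μ₁ μ₂ ρ s s = gLFun μ₁ μ₂ ρ s := by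
  have hdet := covM_det_pos hs le_rfl hρ
  have h1 : 0 < 1 - ρ ^ 2 := by linarith
  rw [g3Fun, quadF_eq le_rfl, gLFun, div_eq_div_iff hdet.ne' (by positivity)]
  ring

end QuadraticForm

section Infimum

variable {μ₁ μ₂ ρ t s : ℝ}

lemma le_gFun {m : ℝ}
    (h : ∀ x y, 1 + μ₁ * t ≤ x → 1 + μ₂ * s ≤ y → m ≤ quadF ρ t s x y) :
    m ≤ gFun μ₁ μ₂ ρ t s :=
  le_csInf ⟨_, _, _, le_rfl, le_rfl, rfl⟩ (by rintro _ ⟨x, y, hx, hy, rfl⟩; exact h x y hx hy)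

lemma gFun_eq_g3Fun
    (h : ∀ x y, 1 + μ₁ * t ≤ x → 1 + μ₂ * s ≤ y → g3Fun μ₁ μ₂ ρ t s ≤ quadF ρ t s x y) :
    gFun μ₁ μ₂ ρ t s = g3Fun μ₁ μ₂ ρ t s :=
  le_antisymm
    (csInf_le ⟨_, by rintro _ ⟨x, y, hx, hy, rfl⟩; exact h x y hx hy⟩ ⟨_, _, le_rfl, le_rfl, rfl⟩)
    (le_gFun h)

end Infimum

section WeightedBound

variable (μ₁ μ₂ ρ α β : ℝ)

/-- A lower bound over `s ≤ t` for `L² / (α² t + (2ραβ + β²) s)`, where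
`L = α (1 + μ₁ t) + β (1 + μ₂ s)`, coming from `L² ≥ 4 (α + β) (L - (α + β))`. -/
noncomputable def weightedLowerBound : ℝ :=
  4 * (α + β) * (α * μ₁ + β * μ₂) / (α ^ 2 + 2 * ρ * α * β + β ^ 2)

lemma sq_sub_weightedLowerBound_mul (hden : α ^ 2 + 2 * ρ * α * β + β ^ 2 ≠ 0) (t s : ℝ) :
    (α * (1 + μ₁ * t) + β * (1 + μ₂ * s)) ^ 2
        - weightedLowerBound μ₁ μ₂ ρ α β * (α ^ 2 * t + (2 * ρ * α * β + β ^ 2) * s)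
      = (α * μ₁ * t + β * μ₂ * s - (α + β)) ^ 2
        + 4 * (α + β) * α * β * (μ₁ * β + (2 * ρ * μ₁ - μ₂) * α)
          / (α ^ 2 + 2 * ρ * α * β + β ^ 2) * (t - s) := by
  have hden' : α * (α + β * 2 * ρ) + β ^ 2 ≠ 0 := by convert hden using 1; ring
  rw [weightedLowerBound]
  field_simp
  ring

variable {μ₁ μ₂ ρ α β t s : ℝ}

lemma weightedLowerBound_mul_le_sq (hα : 0 ≤ α) (hβ : 0 ≤ β)
    (hden : 0 < α ^ 2 + 2 * ρ * α * β + β ^ 2) (hE : 0 ≤ μ₁ * β + (2 * ρ * μ₁ - μ₂) * α)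
    (hst : s ≤ t) :
    weightedLowerBound μ₁ μ₂ ρ α β * (α ^ 2 * t + (2 * ρ * α * β + β ^ 2) * s)
      ≤ (α * (1 + μ₁ * t) + β * (1 + μ₂ * s)) ^ 2 := by
  have h := sq_sub_weightedLowerBound_mul μ₁ μ₂ ρ α β hden.ne' t s
  have hC : 0 ≤ 4 * (α + β) * α * β * (μ₁ * β + (2 * ρ * μ₁ - μ₂) * α)
      / (α ^ 2 + 2 * ρ * α * β + β ^ 2) * (t - s) := by
    have := sub_nonneg.2 hst
    positivity
  nlinarith [sq_nonneg (α * μ₁ * t + β * μ₂ * s - (α + β))]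

lemma eq_of_sq_le_weightedLowerBound_mul (hα : 0 < α) (hβ : 0 < β)
    (hden : 0 < α ^ 2 + 2 * ρ * α * β + β ^ 2) (hE : 0 < μ₁ * β + (2 * ρ * μ₁ - μ₂) * α)
    (hst : s ≤ t)
    (h : (α * (1 + μ₁ * t) + β * (1 + μ₂ * s)) ^ 2
      ≤ weightedLowerBound μ₁ μ₂ ρ α β * (α ^ 2 * t + (2 * ρ * α * β + β ^ 2) * s)) :
    t = s ∧ (α * μ₁ + β * μ₂) * s = α + β := by
  have hid := sq_sub_weightedLowerBound_mul μ₁ μ₂ ρ α β hden.ne' t s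
  have hC : 0 < 4 * (α + β) * α * β * (μ₁ * β + (2 * ρ * μ₁ - μ₂) * α)
      / (α ^ 2 + 2 * ρ * α * β + β ^ 2) := by positivity
  have hsq := sq_nonneg (α * μ₁ * t + β * μ₂ * s - (α + β))
  have hts : t = s := by nlinarith [mul_nonneg hC.le (sub_nonneg.2 hst)]
  subst hts
  refine ⟨rfl, ?_⟩
  nlinarith

lemma sq_add_mul_add_sq_pos (hα : 0 < α) (hρ : ρ ^ 2 < 1) :
    0 < α ^ 2 + 2 * ρ * α * β + β ^ 2 := by
  nlinarith [sq_nonneg (ρ * α + β), mul_pos (mul_pos hα hα) (sub_pos.2 hρ)]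

lemma weightedVariance_pos (hα : 0 < α) (hρ : ρ ^ 2 < 1) (hs : 0 < s) (hst : s ≤ t) :
    0 < α ^ 2 * t + (2 * ρ * α * β + β ^ 2) * s := by
  nlinarith [mul_pos hs (sq_add_mul_add_sq_pos (β := β) hα hρ),
    mul_nonneg (sq_nonneg α) (sub_nonneg.2 hst)]

lemma sq_div_le_quadF (hμ₁ : 0 ≤ μ₁) (hμ₂ : 0 ≤ μ₂) (hα : 0 < α) (hβ : 0 ≤ β) (hρ : ρ ^ 2 < 1)
    (hs : 0 < s) (hst : s ≤ t) {x y : ℝ} (hx : 1 + μ₁ * t ≤ x) (hy : 1 + μ₂ * s ≤ y) :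
    (α * (1 + μ₁ * t) + β * (1 + μ₂ * s)) ^ 2 / (α ^ 2 * t + (2 * ρ * α * β + β ^ 2) * s)
      ≤ quadF ρ t s x y := by
  have ht : 0 < t := hs.trans_le hst
  rw [div_le_iff₀ (weightedVariance_pos hα hρ hs hst)]
  refine le_trans (pow_le_pow_left₀ (by positivity) ?_ 2) (sq_add_le_quadF_mul hs hst hρ α β x y)
  gcongr

lemma weightedLowerBound_le_quadF (hμ₁ : 0 ≤ μ₁) (hμ₂ : 0 ≤ μ₂) (hα : 0 < α) (hβ : 0 ≤ β)
    (hρ : ρ ^ 2 < 1) (hE : 0 ≤ μ₁ * β + (2 * ρ * μ₁ - μ₂) * α) (hs : 0 < s) (hst : s ≤ t)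
    {x y : ℝ} (hx : 1 + μ₁ * t ≤ x) (hy : 1 + μ₂ * s ≤ y) :
    weightedLowerBound μ₁ μ₂ ρ α β ≤ quadF ρ t s x y := by
  refine le_trans ?_ (sq_div_le_quadF hμ₁ hμ₂ hα hβ hρ hs hst hx hy)
  rw [le_div_iff₀ (weightedVariance_pos hα hρ hs hst)]
  exact weightedLowerBound_mul_le_sq hα.le hβ (sq_add_mul_add_sq_pos hα hρ) hE hst

lemma eq_of_gFun_le_weightedLowerBound (hμ₁ : 0 ≤ μ₁) (hμ₂ : 0 ≤ μ₂) (hα : 0 < α) (hβ : 0 < β)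
    (hρ : ρ ^ 2 < 1) (hE : 0 < μ₁ * β + (2 * ρ * μ₁ - μ₂) * α) (hs : 0 < s) (hst : s ≤ t)
    (h : gFun μ₁ μ₂ ρ t s ≤ weightedLowerBound μ₁ μ₂ ρ α β) :
    t = s ∧ (α * μ₁ + β * μ₂) * s = α + β := by
  refine eq_of_sq_le_weightedLowerBound_mul hα hβ (sq_add_mul_add_sq_pos hα hρ) hE hst ?_
  rw [← div_le_iff₀ (weightedVariance_pos hα hρ hs hst)]
  exact (le_gFun fun x y hx hy => sq_div_le_quadF hμ₁ hμ₂ hα hβ.le hρ hs hst hx hy).trans h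

end WeightedBound

section Corner

/-- `(cornerWeight μ₁ μ₂ ρ S, cornerWeight μ₂ μ₁ ρ S) = (1 - ρ²) S · Σ_{SS}⁻¹ (1 + μ₁S, 1 + μ₂S)ᵀ`,
the normal to the level set of `quadF ρ S S` through the corner of the constraint set. -/
def cornerWeight (μ₁ μ₂ ρ S : ℝ) : ℝ :=
  1 + μ₁ * S - ρ * (1 + μ₂ * S)

variable {μ₁ μ₂ ρ S : ℝ}

-- In this section and the next, `hstat` says that `S` is the critical point of `gLFun μ₁ μ₂ ρ`.

lemma cornerWeight_add_eq (hstat : (μ₁ ^ 2 + μ₂ ^ 2 - 2 * ρ * μ₁ * μ₂) * S ^ 2 = 2 * (1 - ρ)) :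
    cornerWeight μ₁ μ₂ ρ S + cornerWeight μ₂ μ₁ ρ S
      = (cornerWeight μ₁ μ₂ ρ S * μ₁ + cornerWeight μ₂ μ₁ ρ S * μ₂) * S := by
  unfold cornerWeight
  linear_combination -hstat

lemma weightedLowerBound_cornerWeight (hS : 0 < S) (hρ : ρ ^ 2 < 1)
    (hden : 0 < cornerWeight μ₁ μ₂ ρ S ^ 2
      + 2 * ρ * cornerWeight μ₁ μ₂ ρ S * cornerWeight μ₂ μ₁ ρ S + cornerWeight μ₂ μ₁ ρ S ^ 2)
    (hstat : (μ₁ ^ 2 + μ₂ ^ 2 - 2 * ρ * μ₁ * μ₂) * S ^ 2 = 2 * (1 - ρ)) :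
    weightedLowerBound μ₁ μ₂ ρ (cornerWeight μ₁ μ₂ ρ S) (cornerWeight μ₂ μ₁ ρ S)
      = gLFun μ₁ μ₂ ρ S := by
  have h1 : 0 < 1 - ρ ^ 2 := by linarith
  rw [weightedLowerBound, gLFun, div_eq_div_iff hden.ne' (by positivity)]
  unfold cornerWeight
  linear_combination
    -(1 - ρ ^ 2) * ((μ₁ ^ 2 + μ₂ ^ 2 - 2 * ρ * μ₁ * μ₂) * S ^ 2 - 2 * (1 - ρ)) * hstat

lemma gLFun_eq_of_stationary (hS : 0 < S) (hρ : ρ ^ 2 < 1)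
    (hstat : (μ₁ ^ 2 + μ₂ ^ 2 - 2 * ρ * μ₁ * μ₂) * S ^ 2 = 2 * (1 - ρ)) :
    gLFun μ₁ μ₂ ρ S = 2 / (1 + ρ) * (μ₁ + μ₂ + 2 / S) := by
  have h1 : 0 < 1 + ρ := by nlinarith
  have h2 : 0 < 1 - ρ := by nlinarith
  rw [gLFun, div_eq_iff (by positivity)]
  field_simp
  linear_combination (1 + ρ) * hstat

end Corner

section ParameterRegion

variable {μ₁ μ₂ ρ S : ℝ}

lemma pos_of_rhoHat₁_lt (hμ₁ : 0 < μ₁) (hμ₁₂ : μ₁ ≤ μ₂)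
    (hρ₁ : (μ₁ + μ₂ - √((μ₁ + μ₂) ^ 2 - 4 * μ₁ * (μ₂ - μ₁))) / (4 * μ₁) < ρ) : 0 < ρ := by
  have hR : √((μ₁ + μ₂) ^ 2 - 4 * μ₁ * (μ₂ - μ₁)) ≤ μ₁ + μ₂ :=
    Real.sqrt_le_iff.2 ⟨by linarith, by nlinarith⟩
  exact lt_of_le_of_lt (div_nonneg (by linarith) (by positivity)) hρ₁

/-- `ρ̂₁` is the smaller root of this quadratic, the larger one is at least `1`. -/
lemma quadratic_neg_of_rhoHat₁_lt (hμ₁ : 0 < μ₁) (hμ₁₂ : μ₁ ≤ μ₂) (hρ : ρ < 1)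
    (hρ₁ : (μ₁ + μ₂ - √((μ₁ + μ₂) ^ 2 - 4 * μ₁ * (μ₂ - μ₁))) / (4 * μ₁) < ρ) :
    4 * μ₁ * ρ ^ 2 - 2 * (μ₁ + μ₂) * ρ + (μ₂ - μ₁) < 0 := by
  set R := √((μ₁ + μ₂) ^ 2 - 4 * μ₁ * (μ₂ - μ₁))
  have hR2 : R ^ 2 = (μ₁ + μ₂) ^ 2 - 4 * μ₁ * (μ₂ - μ₁) := Real.sq_sqrt (by nlinarith)
  have hlo : μ₁ + μ₂ - 4 * μ₁ * ρ < R := by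
    rw [div_lt_iff₀ (by positivity)] at hρ₁
    linarith
  have hhi : 3 * μ₁ - μ₂ ≤ R := Real.le_sqrt_of_sq_le (by nlinarith)
  have hsq : (μ₁ + μ₂ - 4 * μ₁ * ρ) ^ 2 < R ^ 2 := sq_lt_sq' (by nlinarith) hlo
  nlinarith

lemma cornerWeight_pos_of_le (hμ₁ : 0 < μ₁) (hμ₁₂ : μ₁ ≤ μ₂) (hρ : ρ < 1) (hS : 0 ≤ S) :
    0 < cornerWeight μ₂ μ₁ ρ S := by
  unfold cornerWeight
  nlinarith [mul_nonneg (by nlinarith : (0 : ℝ) ≤ μ₂ - ρ * μ₁) hS]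

lemma cornerWeight_pos_of_lt_rhoHat₂ (hμ₁ : 0 < μ₁) (hμ₁₂ : μ₁ ≤ μ₂) (hρ : ρ ^ 2 < 1) (hS : 0 < S)
    (hρ₂ : ρ < (μ₁ + μ₂) / (2 * μ₂))
    (hstat : (μ₁ ^ 2 + μ₂ ^ 2 - 2 * ρ * μ₁ * μ₂) * S ^ 2 = 2 * (1 - ρ)) :
    0 < cornerWeight μ₁ μ₂ ρ S := by
  unfold cornerWeight
  rcases le_or_gt (ρ * μ₂) μ₁ with h | h
  · nlinarith [mul_nonneg (sub_nonneg.2 h) hS.le]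
  have hlt : μ₁ < μ₂ := by nlinarith
  have hgap : 2 * (ρ * μ₂ - μ₁) ^ 2 < (1 - ρ) * (μ₁ ^ 2 + μ₂ ^ 2 - 2 * ρ * μ₁ * μ₂) := by
    have hρ₂' : 2 * μ₂ * ρ < μ₁ + μ₂ := by
      rwa [lt_div_iff₀ (by linarith), mul_comm] at hρ₂
    have key : (1 - ρ) * (μ₁ ^ 2 + μ₂ ^ 2 - 2 * ρ * μ₁ * μ₂) - 2 * (ρ * μ₂ - μ₁) ^ 2
        = (1 + ρ) * (μ₂ - μ₁) * (μ₁ + μ₂ - 2 * μ₂ * ρ) := by ring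
    nlinarith [mul_pos (mul_pos (by nlinarith : (0 : ℝ) < 1 + ρ) (sub_pos.2 hlt)) (sub_pos.2 hρ₂')]
  have hsq : ((ρ * μ₂ - μ₁) * S) ^ 2 < (1 - ρ) ^ 2 := by
    nlinarith [mul_lt_mul_of_pos_right hgap (by positivity : (0 : ℝ) < S ^ 2)]
  nlinarith [abs_lt_of_sq_lt_sq' hsq (by nlinarith)]

lemma cornerWeight_combination_pos (hμ₁ : 0 < μ₁) (hρ0 : 0 < ρ) (hρ : ρ < 1) (hS : 0 < S)
    (hquad : 4 * μ₁ * ρ ^ 2 - 2 * (μ₁ + μ₂) * ρ + (μ₂ - μ₁) < 0)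
    (hstat : (μ₁ ^ 2 + μ₂ ^ 2 - 2 * ρ * μ₁ * μ₂) * S ^ 2 = 2 * (1 - ρ)) :
    0 < μ₁ * cornerWeight μ₂ μ₁ ρ S + (2 * ρ * μ₁ - μ₂) * cornerWeight μ₁ μ₂ ρ S := by
  set D := μ₁ ^ 2 + μ₂ ^ 2 - 2 * ρ * μ₁ * μ₂
  have hD : 0 < D := by nlinarith
  have hform : μ₁ * cornerWeight μ₂ μ₁ ρ S + (2 * ρ * μ₁ - μ₂) * cornerWeight μ₁ μ₂ ρ S
      = ρ * D * S - (1 - ρ) * (μ₂ - μ₁ - 2 * ρ * μ₁) := by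
    unfold cornerWeight; ring
  rw [hform]
  have hDS : 0 < ρ * D * S := by positivity
  rcases le_or_gt μ₂ (μ₁ + 2 * ρ * μ₁) with h | h
  · nlinarith
  have hlt : μ₁ < μ₂ := by nlinarith
  have hgap : (1 - ρ) * (μ₂ - μ₁ - 2 * ρ * μ₁) ^ 2 < 2 * ρ ^ 2 * D := by
    have key : 2 * ρ ^ 2 * D - (1 - ρ) * (μ₂ - μ₁ - 2 * ρ * μ₁) ^ 2
        = -(1 + ρ) * (μ₂ - μ₁) * (4 * μ₁ * ρ ^ 2 - 2 * (μ₁ + μ₂) * ρ + (μ₂ - μ₁)) := by ring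
    nlinarith [mul_pos (mul_pos (by linarith : (0 : ℝ) < 1 + ρ) (sub_pos.2 hlt)) (neg_pos.2 hquad)]
  have hsq : ((1 - ρ) * (μ₂ - μ₁ - 2 * ρ * μ₁)) ^ 2 < (ρ * D * S) ^ 2 := by
    have : (ρ * D * S) ^ 2 = (1 - ρ) * (2 * ρ ^ 2 * D) := by linear_combination ρ ^ 2 * D * hstat
    rw [this, mul_pow, sq (1 - ρ), mul_assoc]
    exact mul_lt_mul_of_pos_left hgap (by linarith)
  nlinarith [abs_lt_of_sq_lt_sq' hsq hDS.le]

end ParameterRegion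

theorem stmt19_general (μ₁ μ₂ ρ : ℝ) (hμ1 : 0 < μ₁) (hμ12 : μ₁ ≤ μ₂)
    (hρu : ρ < 1)
    (hρ1 : (μ₁ + μ₂ - Real.sqrt ((μ₁ + μ₂) ^ 2 - 4 * μ₁ * (μ₂ - μ₁))) / (4 * μ₁) < ρ)
    (hρ2 : ρ < (μ₁ + μ₂) / (2 * μ₂)) :
    IsLeast { v : ℝ | ∃ t s : ℝ, 0 < s ∧ s ≤ t ∧ v = gFun μ₁ μ₂ ρ t s }
      (gLFun μ₁ μ₂ ρ (Real.sqrt (2 * (1 - ρ) / (μ₁ ^ 2 + μ₂ ^ 2 - 2 * ρ * μ₁ * μ₂)))) ∧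
    gLFun μ₁ μ₂ ρ (Real.sqrt (2 * (1 - ρ) / (μ₁ ^ 2 + μ₂ ^ 2 - 2 * ρ * μ₁ * μ₂)))
      = 2 / (1 + ρ) * (μ₁ + μ₂ +
          2 / Real.sqrt (2 * (1 - ρ) / (μ₁ ^ 2 + μ₂ ^ 2 - 2 * ρ * μ₁ * μ₂))) ∧
    gFun μ₁ μ₂ ρ (Real.sqrt (2 * (1 - ρ) / (μ₁ ^ 2 + μ₂ ^ 2 - 2 * ρ * μ₁ * μ₂)))
        (Real.sqrt (2 * (1 - ρ) / (μ₁ ^ 2 + μ₂ ^ 2 - 2 * ρ * μ₁ * μ₂)))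
      = gLFun μ₁ μ₂ ρ (Real.sqrt (2 * (1 - ρ) / (μ₁ ^ 2 + μ₂ ^ 2 - 2 * ρ * μ₁ * μ₂))) ∧
    (∀ t s : ℝ, 0 < s → s ≤ t →
      gFun μ₁ μ₂ ρ t s
        = gLFun μ₁ μ₂ ρ (Real.sqrt (2 * (1 - ρ) / (μ₁ ^ 2 + μ₂ ^ 2 - 2 * ρ * μ₁ * μ₂))) →
      t = Real.sqrt (2 * (1 - ρ) / (μ₁ ^ 2 + μ₂ ^ 2 - 2 * ρ * μ₁ * μ₂)) ∧
      s = Real.sqrt (2 * (1 - ρ) / (μ₁ ^ 2 + μ₂ ^ 2 - 2 * ρ * μ₁ * μ₂))) := by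
  have hρ0 := pos_of_rhoHat₁_lt hμ1 hμ12 hρ1
  have hρ : ρ ^ 2 < 1 := by nlinarith
  have hμ2 : 0 < μ₂ := hμ1.trans_le hμ12
  have hD : 0 < μ₁ ^ 2 + μ₂ ^ 2 - 2 * ρ * μ₁ * μ₂ := by nlinarith [mul_pos hμ1 hμ2]
  set S := √(2 * (1 - ρ) / (μ₁ ^ 2 + μ₂ ^ 2 - 2 * ρ * μ₁ * μ₂))
  have hS : 0 < S := Real.sqrt_pos.2 (div_pos (by linarith) hD)
  have hstat : (μ₁ ^ 2 + μ₂ ^ 2 - 2 * ρ * μ₁ * μ₂) * S ^ 2 = 2 * (1 - ρ) := by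
    rw [Real.sq_sqrt (div_nonneg (by linarith) hD.le), mul_div_cancel₀ _ hD.ne']
  have hα := cornerWeight_pos_of_lt_rhoHat₂ hμ1 hμ12 hρ hS hρ2 hstat
  have hβ := cornerWeight_pos_of_le hμ1 hμ12 hρu hS.le
  have hE := cornerWeight_combination_pos hμ1 hρ0 hρu hS
    (quadratic_neg_of_rhoHat₁_lt hμ1 hμ12 hρu hρ1) hstat
  have hV := weightedLowerBound_cornerWeight hS hρ (sq_add_mul_add_sq_pos hα hρ) hstat
  have hquadF : ∀ {t s x y}, 0 < s → s ≤ t → 1 + μ₁ * t ≤ x → 1 + μ₂ * s ≤ y →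
      gLFun μ₁ μ₂ ρ S ≤ quadF ρ t s x y := fun hs hst hx hy =>
    hV ▸ weightedLowerBound_le_quadF hμ1.le hμ2.le hα hβ.le hρ hE.le hs hst hx hy
  have hSS : gFun μ₁ μ₂ ρ S S = gLFun μ₁ μ₂ ρ S := by
    rw [gFun_eq_g3Fun] <;> rw [g3Fun_diag μ₁ μ₂ hS hρ]
    exact fun x y => hquadF hS le_rfl
  refine ⟨⟨⟨S, S, hS, le_rfl, hSS.symm⟩, ?_⟩, gLFun_eq_of_stationary hS hρ hstat, hSS, ?_⟩
  · rintro _ ⟨t, s, hs, hst, rfl⟩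
    exact le_gFun fun x y => hquadF hs hst
  · intro t s hs hst heq
    obtain ⟨rfl, hs'⟩ := eq_of_gFun_le_weightedLowerBound hμ1.le hμ2.le hα hβ hρ hE hs hst
      (heq.trans hV.symm).le
    have htS : t = S := mul_left_cancel₀ (by positivity) (hs'.trans (cornerWeight_add_eq hstat))
    exact ⟨htS, htS⟩

theorem stmt19 (μ₁ μ₂ ρ : ℝ) (hμ1 : 0 < μ₁) (hμ12 : μ₁ ≤ μ₂)
    (hρl : -1 < ρ) (hρu : ρ < 1)
    (hρ1 : (μ₁ + μ₂ - Real.sqrt ((μ₁ + μ₂) ^ 2 - 4 * μ₁ * (μ₂ - μ₁))) / (4 * μ₁) < ρ)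
    (hρ2 : ρ < (μ₁ + μ₂) / (2 * μ₂)) :
    IsLeast { v : ℝ | ∃ t s : ℝ, 0 < s ∧ s ≤ t ∧ v = gFun μ₁ μ₂ ρ t s }
      (gLFun μ₁ μ₂ ρ (Real.sqrt (2 * (1 - ρ) / (μ₁ ^ 2 + μ₂ ^ 2 - 2 * ρ * μ₁ * μ₂)))) ∧
    gLFun μ₁ μ₂ ρ (Real.sqrt (2 * (1 - ρ) / (μ₁ ^ 2 + μ₂ ^ 2 - 2 * ρ * μ₁ * μ₂)))
      = 2 / (1 + ρ) * (μ₁ + μ₂ +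
          2 / Real.sqrt (2 * (1 - ρ) / (μ₁ ^ 2 + μ₂ ^ 2 - 2 * ρ * μ₁ * μ₂))) ∧
    gFun μ₁ μ₂ ρ (Real.sqrt (2 * (1 - ρ) / (μ₁ ^ 2 + μ₂ ^ 2 - 2 * ρ * μ₁ * μ₂)))
        (Real.sqrt (2 * (1 - ρ) / (μ₁ ^ 2 + μ₂ ^ 2 - 2 * ρ * μ₁ * μ₂)))
      = gLFun μ₁ μ₂ ρ (Real.sqrt (2 * (1 - ρ) / (μ₁ ^ 2 + μ₂ ^ 2 - 2 * ρ * μ₁ * μ₂))) ∧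
    (∀ t s : ℝ, 0 < s → s ≤ t →
      gFun μ₁ μ₂ ρ t s
        = gLFun μ₁ μ₂ ρ (Real.sqrt (2 * (1 - ρ) / (μ₁ ^ 2 + μ₂ ^ 2 - 2 * ρ * μ₁ * μ₂))) →
      t = Real.sqrt (2 * (1 - ρ) / (μ₁ ^ 2 + μ₂ ^ 2 - 2 * ρ * μ₁ * μ₂)) ∧
      s = Real.sqrt (2 * (1 - ρ) / (μ₁ ^ 2 + μ₂ ^ 2 - 2 * ρ * μ₁ * μ₂))) :=
  stmt19_general μ₁ μ₂ ρ hμ1 hμ12 hρu hρ1 hρ2
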